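/- arXiv:2410.22611 — 2 statements merged into one kernel-verified Lean document; each statement's English description precedes it below -/
import Mathlib

section
/- Let d ≥ 2, let X be a cubical set in ℤ^d and let c ∈ ℤ^d. Then every point x of the realization |N_X(c)| of the neighborhood of c in X lying on its perimeter (i.e., with ‖x − c‖_∞ = 3/2) is a regular point of |N_X(c)|. In other words, the neighborhood of a cell in a cubical set has no irregular points on its perimeter. -/
open Metric Set

/-- The closed unit cube centered at the lattice point `c`. -/
def cube (d : ℕ) (c : Fin d → ℤ) : Set (EuclideanSpace ℝ (Fin d)) :=
  {x | ∀ i, |x i - (c i : ℝ)| ≤ 1 / 2}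

/-- The realization of a cubical set: the union of the closed unit cubes of its cells. -/
def realiz (d : ℕ) (X : Finset (Fin d → ℤ)) : Set (EuclideanSpace ℝ (Fin d)) :=
  ⋃ c ∈ X, cube d c

/-- `x` is a regular point of the realization of `X`: either an interior point, or the
punctured intersection with every sufficiently small ball is contractible. -/
def RegPt (d : ℕ) (X : Finset (Fin d → ℤ)) (x : EuclideanSpace ℝ (Fin d)) : Prop :=
  x ∈ interior (realiz d X) ∨
    ∃ ε₀ > 0, ∀ ε : ℝ, 0 < ε → ε < ε₀ →
      ContractibleSpace ↥((Metric.ball x ε ∩ realiz d X) \ {x})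

/-- A cubical set is regular if all points of its realization are regular. -/
def RegularCub (d : ℕ) (X : Finset (Fin d → ℤ)) : Prop :=
  ∀ x ∈ realiz d X, RegPt d X x

/-- A clump: a nonempty (cubical) set which is regular with contractible realization. -/
def IsClump (d : ℕ) (X : Finset (Fin d → ℤ)) : Prop :=
  X.Nonempty ∧ RegularCub d X ∧ ContractibleSpace ↥(realiz d X)

/-- The neighborhood of a cell `c` in the cubical set `X`:
`{c} ∪ {y ∈ X : ‖y − c‖_∞ ≤ 1}`. -/
def nbhd (d : ℕ) (X : Finset (Fin d → ℤ)) (c : Fin d → ℤ) : Finset (Fin d → ℤ) :=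
  insert c (X.filter fun y => ∀ i, |y i - c i| ≤ 1)

/- ### Auxiliary lemmas -/

lemma cube_convex (d : ℕ) (y : Fin d → ℤ) : Convex ℝ (cube d y) := by
  intro u hu v hv a b ha hb hab i
  have h : (a • u + b • v) i = a * u i + b * v i := rfl
  rw [h]
  calc |a * u i + b * v i - (y i : ℝ)|
      = |a * (u i - y i) + b * (v i - y i)| := by
        congr 1; linear_combination ((y i : ℝ)) * hab
    _ ≤ |a * (u i - y i)| + |b * (v i - y i)| := abs_add_le _ _
    _ = a * |u i - (y i : ℝ)| + b * |v i - (y i : ℝ)| := by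
        rw [abs_mul, abs_mul, abs_of_nonneg ha, abs_of_nonneg hb]
    _ ≤ a * (1 / 2) + b * (1 / 2) := by
        gcongr
        exacts [hu i, hv i]
    _ = 1 / 2 := by rw [← add_mul, hab, one_mul]

lemma abs_coord_le_dist {d : ℕ} (z x : EuclideanSpace ℝ (Fin d)) (i : Fin d) :
    |z i - x i| ≤ dist z x := by
  rw [EuclideanSpace.dist_eq, ← Real.sqrt_sq_eq_abs]
  apply Real.sqrt_le_sqrt
  have h := Finset.single_le_sum (f := fun k => dist (z k) (x k) ^ 2)
    (fun k _ => sq_nonneg _) (Finset.mem_univ i)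
  simpa [Real.dist_eq] using h

/-- From a pointwise choice of radii on a finite set, get a uniform radius. -/
lemma finset_uniform {α : Type*} (s : Finset α) (P : α → ℝ → Prop)
    (h : ∀ a ∈ s, ∃ δ > 0, ∀ ε : ℝ, 0 < ε → ε ≤ δ → P a ε) :
    ∃ δ > 0, ∀ ε : ℝ, 0 < ε → ε ≤ δ → ∀ a ∈ s, P a ε := by
  classical
  induction s using Finset.induction with
  | empty => exact ⟨1, one_pos, fun ε _ _ a ha => absurd ha (by simp)⟩
  | @insert a s hna ih =>
    obtain ⟨δ₂, hδ₂, h2⟩ := ih (fun b hb => h b (Finset.mem_insert_of_mem hb))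
    obtain ⟨δ₁, hδ₁, h1⟩ := h a (Finset.mem_insert_self _ _)
    refine ⟨min δ₁ δ₂, lt_min hδ₁ hδ₂, fun ε hε hεle b hb => ?_⟩
    rcases Finset.mem_insert.mp hb with rfl | hb'
    · exact h1 ε hε (hεle.trans (min_le_left _ _))
    · exact h2 ε hε (hεle.trans (min_le_right _ _)) b hb'

/-- Every point of the realization of the neighborhood of a cell `c` in a
cubical set `X` lying on its perimeter (sup-distance `3/2` from `c`) is a regular point. -/
theorem irregular_not_on_perimeter (d : ℕ) (hd : 2 ≤ d)
    (X : Finset (Fin d → ℤ)) (hX : X.Nonempty) (c : Fin d → ℤ)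
    (x : EuclideanSpace ℝ (Fin d)) (hx : x ∈ realiz d (nbhd d X c))
    (hper : (∀ i, |x i - (c i : ℝ)| ≤ 3 / 2) ∧ ∃ i, |x i - (c i : ℝ)| = 3 / 2) :
    RegPt d (nbhd d X c) x := by
  classical
  obtain ⟨-, j, hj⟩ := hper
  -- the sign of the extremal coordinate
  obtain ⟨s, hs1, hsx⟩ : ∃ s : ℝ, |s| = 1 ∧ x j - (c j : ℝ) = s * (3 / 2) := by
    rcases (abs_eq (by norm_num : (0:ℝ) ≤ 3/2)).mp hj with h | h
    · exact ⟨1, abs_one, by linarith⟩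
    · exact ⟨-1, by norm_num, by linarith⟩
  have hss : s * s = 1 := by
    have := abs_mul_abs_self s
    rw [hs1, one_mul] at this; linarith
  -- any cube of the neighborhood containing x has x on its j-face in direction s
  have hface : ∀ y ∈ nbhd d X c, x ∈ cube d y → x j - ((y j : ℤ) : ℝ) = s * (1 / 2) := by
    intro y hy hxy
    have h1 : |x j - ((y j : ℤ) : ℝ)| ≤ 1 / 2 := hxy j
    have hyc : |((y j : ℤ) : ℝ) - (c j : ℝ)| ≤ 1 := by
      rcases Finset.mem_insert.mp hy with rfl | hy'
      · exfalso
        rw [hj] at h1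
        norm_num at h1
      · have h2 := (Finset.mem_filter.mp hy').2 j
        have h3 : ((|y j - c j| : ℤ) : ℝ) ≤ 1 := by exact_mod_cast h2
        push_cast at h3
        exact h3
    rcases abs_le.mp h1 with ⟨h1a, h1b⟩
    rcases abs_le.mp hyc with ⟨h2a, h2b⟩
    rcases (abs_eq (le_of_lt one_pos)).mp hs1 with rfl | rfl
    · linarith
    · linarith
  -- separation radius from the cubes not containing x
  obtain ⟨δ, hδ, hδall⟩ := finset_uniform (nbhd d X c)
      (fun y ε => x ∉ cube d y → ∀ z : EuclideanSpace ℝ (Fin d), dist z x < ε → z ∉ cube d y)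
      (by
        intro y hy
        by_cases hxy : x ∈ cube d y
        · exact ⟨1, one_pos, fun ε _ _ h => absurd hxy h⟩
        · simp only [cube, mem_setOf_eq, not_forall, not_le] at hxy
          obtain ⟨i, hi⟩ := hxy
          refine ⟨|x i - ((y i : ℤ) : ℝ)| - 1 / 2, by linarith, fun ε hε hεle _ z hz hzc => ?_⟩
          have h2 := hzc i
          have h3 := abs_coord_le_dist z x i
          have h4 : |x i - ((y i : ℤ) : ℝ)| ≤ |x i - z i| + |z i - ((y i : ℤ) : ℝ)| :=
            abs_sub_le _ _ _
          rw [abs_sub_comm (x i) (z i)] at h4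
          linarith)
  -- the point x belongs to some cube of the neighborhood
  simp only [realiz, mem_iUnion, exists_prop] at hx
  obtain ⟨y₀, hy₀, hxy₀⟩ := hx
  refine Or.inr ⟨min δ 1, lt_min hδ one_pos, fun ε hε hεlt => ?_⟩
  have hεδ : ε < δ := lt_of_lt_of_le hεlt (min_le_left _ _)
  have hε1 : ε < 1 := lt_of_lt_of_le hεlt (min_le_right _ _)
  -- the star center
  set p : EuclideanSpace ℝ (Fin d) := x + (-(s * (ε / 2))) • EuclideanSpace.single j (1 : ℝ)
    with hp_def
  have hpj : p j = x j - s * (ε / 2) := by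
    simp [hp_def, PiLp.add_apply, PiLp.smul_apply, EuclideanSpace.single_apply]
    ring
  have hpi : ∀ i, i ≠ j → p i = x i := by
    intro i hij
    simp [hp_def, PiLp.add_apply, PiLp.smul_apply, EuclideanSpace.single_apply, hij]
  have hdist : dist p x = ε / 2 := by
    rw [dist_eq_norm, hp_def, add_sub_cancel_left, norm_smul, EuclideanSpace.norm_single]
    simp [abs_mul, hs1, abs_of_pos hε]
  have hpx : p ≠ x := by
    intro h
    rw [h, dist_self] at hdist
    linarith
  have hpball : p ∈ ball x ε := by
    rw [mem_ball, hdist]; linarith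
  have hpcube : ∀ y ∈ nbhd d X c, x ∈ cube d y → p ∈ cube d y := by
    intro y hy hxy i
    by_cases hij : i = j
    · subst hij
      have hf := hface y hy hxy
      have heq : p i - ((y i : ℤ) : ℝ) = s * ((1 - ε) / 2) := by
        rw [hpj]
        have : x i - s * (ε / 2) - ((y i : ℤ) : ℝ) = (x i - ((y i : ℤ) : ℝ)) - s * (ε / 2) := by
          ring
        rw [this, hf]; ring
      rw [heq, abs_mul, hs1, one_mul, abs_of_nonneg (by linarith)]
      linarith
    · rw [hpi i hij]; exact hxy i
  have hpS : p ∈ (ball x ε ∩ realiz d (nbhd d X c)) \ {x} := by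
    refine ⟨⟨hpball, ?_⟩, hpx⟩
    exact mem_iUnion₂.mpr ⟨y₀, hy₀, hpcube y₀ hy₀ hxy₀⟩
  -- star convexity
  have hstar : StarConvex ℝ p ((ball x ε ∩ realiz d (nbhd d X c)) \ {x}) := by
    intro z hz a b ha hb hab
    obtain ⟨⟨hzball, hzreal⟩, hznex⟩ := hz
    simp only [realiz, mem_iUnion, exists_prop] at hzreal
    obtain ⟨y, hy, hzy⟩ := hzreal
    have hxy : x ∈ cube d y := by
      by_contra hxy
      exact hδall ε hε (le_of_lt hεδ) y hy hxy z (mem_ball.mp hzball) hzy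
    have hwball : a • p + b • z ∈ ball x ε := convex_ball x ε hpball hzball ha hb hab
    have hwcube : a • p + b • z ∈ cube d y :=
      cube_convex d y (hpcube y hy hxy) hzy ha hb hab
    refine ⟨⟨hwball, mem_iUnion₂.mpr ⟨y, hy, hwcube⟩⟩, ?_⟩
    -- the segment avoids x
    rcases ha.eq_or_lt with rfl0 | ha'
    · have hb1 : b = 1 := by linarith [hab]
      have : a • p + b • z = z := by rw [← rfl0, hb1]; simp
      rw [this]
      exact hznex
    · have hwj : (a • p + b • z) j = a * p j + b * z j := rfl
      have hzj : s * (z j - x j) ≤ 0 := by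
        have h1 : s * (z j - ((y j : ℤ) : ℝ)) ≤ 1 / 2 := by
          refine le_trans (le_abs_self _) ?_
          rw [abs_mul, hs1, one_mul]
          exact hzy j
        have h2 : s * (x j - ((y j : ℤ) : ℝ)) = 1 / 2 := by
          rw [hface y hy hxy, ← mul_assoc, hss, one_mul]
        have h3 : s * (z j - x j) = s * (z j - ((y j : ℤ) : ℝ)) - s * (x j - ((y j : ℤ) : ℝ)) := by
          ring
        linarith
      have hpjx : s * (p j - x j) = -(ε / 2) := by
        rw [hpj]
        have : s * (x j - s * (ε / 2) - x j) = -(s * s) * (ε / 2) := by ring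
        rw [this, hss]; ring
      have hsplit : s * ((a * p j + b * z j) - x j)
          = a * (s * (p j - x j)) + b * (s * (z j - x j)) := by
        linear_combination (s * x j) * hab
      have hneg : s * ((a • p + b • z) j - x j) < 0 := by
        rw [hwj, hsplit, hpjx]
        nlinarith
      intro hmem
      rw [mem_singleton_iff] at hmem
      rw [hmem] at hneg
      simp at hneg
  exact (hstar.contractibleSpace ⟨p, hpS⟩)
end

section
/- Let d ≥ 2 and let X be a cubical set in ℤ^d. Then X is regular if and only if for every c ∈ X the neighborhood N_X(c) is a regular cubical set. -/
/-!
Regularity at a point `x` only depends on the cubes through `x`. The neighborhood `N_X(c)` keeps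
every cube of `X` through a point `x` of its realization unless one of them lies at
`ℓ∞`-distance at least `2` from `c`. In that case all cubes of `N_X(c)` through `x` share a
coordinate face containing `x`, so a small punctured ball about `x` meets `|N_X(c)|` in a set that
is star-shaped about a point pushed slightly off that face, hence contractible.
-/

open Metric Set

lemma isClosed_cube (d : ℕ) (c : Fin d → ℤ) : IsClosed (cube d c) := by
  simp only [cube, Set.ofPred_forall]
  exact isClosed_iInter fun i => isClosed_le (by fun_prop) continuous_const

lemma convex_cube (d : ℕ) (c : Fin d → ℤ) : Convex ℝ (cube d c) := by
  intro y hy z hz a b ha hb hab i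
  have hcomb : (a • y + b • z) i - c i = a * (y i - c i) + b * (z i - c i) := by
    simp only [PiLp.add_apply, PiLp.smul_apply, smul_eq_mul]
    linear_combination (c i : ℝ) * hab
  rw [hcomb]
  calc |a * (y i - c i) + b * (z i - c i)|
      ≤ a * |y i - c i| + b * |z i - c i| := by
        refine (abs_add_le _ _).trans_eq ?_
        rw [abs_mul, abs_mul, abs_of_nonneg ha, abs_of_nonneg hb]
    _ ≤ a * (1 / 2) + b * (1 / 2) := by gcongr <;> [exact hy i; exact hz i]
    _ = 1 / 2 := by linear_combination hab / 2

lemma abs_sub_le_one_of_mem_cube {d : ℕ} {x : EuclideanSpace ℝ (Fin d)} {s t : Fin d → ℤ}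
    (hs : x ∈ cube d s) (ht : x ∈ cube d t) (i : Fin d) : |s i - t i| ≤ 1 := by
  have h : |((s i - t i : ℤ) : ℝ)| < 2 := by
    push_cast
    calc |(s i : ℝ) - t i| = |(x i - t i) - (x i - s i)| := by ring_nf
      _ ≤ |x i - t i| + |x i - s i| := abs_sub _ _
      _ < 2 := by linarith [hs i, ht i]
  have h' : |s i - t i| < 2 := by exact_mod_cast h
  omega

lemma abs_sub_eq_half_of_mem_cube {d : ℕ} {x : EuclideanSpace ℝ (Fin d)} {s t : Fin d → ℤ}
    (hs : x ∈ cube d s) (ht : x ∈ cube d t) {i : Fin d} (hst : s i ≠ t i) :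
    |x i - s i| = 1 / 2 := by
  have h : (1 : ℝ) ≤ |((s i - t i : ℤ) : ℝ)| := by
    have : (1 : ℤ) ≤ |s i - t i| := Int.one_le_abs (sub_ne_zero.2 hst)
    exact_mod_cast this
  push_cast at h
  have hx := hs i
  have hxt := ht i
  rw [abs_le] at hx hxt
  rcases le_abs'.1 h with h | h
  · rw [abs_of_nonneg (by linarith)]; linarith
  · rw [abs_of_nonpos (by linarith)]; linarith

lemma mem_realiz {d : ℕ} {X : Finset (Fin d → ℤ)} {z : EuclideanSpace ℝ (Fin d)} :
    z ∈ realiz d X ↔ ∃ s ∈ X, z ∈ cube d s := by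
  simp [realiz]

def realizAt (d : ℕ) (X : Finset (Fin d → ℤ)) (x : EuclideanSpace ℝ (Fin d)) :
    Set (EuclideanSpace ℝ (Fin d)) :=
  ⋃ s ∈ {s | s ∈ X ∧ x ∈ cube d s}, cube d s

lemma realizAt_subset_realiz (d : ℕ) (X : Finset (Fin d → ℤ)) (x : EuclideanSpace ℝ (Fin d)) :
    realizAt d X x ⊆ realiz d X :=
  biUnion_mono (fun _ hs => hs.1) fun _ _ => subset_rfl

lemma exists_ball_inter_realiz_eq (d : ℕ) (X : Finset (Fin d → ℤ))
    (x : EuclideanSpace ℝ (Fin d)) :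
    ∃ δ > 0, ∀ ε ≤ δ, ball x ε ∩ realiz d X = ball x ε ∩ realizAt d X x := by
  set U := ⋃ s ∈ {s | s ∈ X ∧ x ∉ cube d s}, cube d s
  have hU : IsClosed U :=
    (X.finite_toSet.subset fun _ hs => hs.1).isClosed_biUnion fun s _ => isClosed_cube d s
  have hxU : x ∉ U := by
    simp only [U, mem_iUnion₂]
    rintro ⟨s, hs, hxs⟩
    exact hs.2 hxs
  obtain ⟨δ, hδ, hball⟩ := Metric.isOpen_iff.1 hU.isOpen_compl x hxU
  refine ⟨δ, hδ, fun ε hε => ?_⟩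
  refine Subset.antisymm (fun z ⟨hzε, hz⟩ => ⟨hzε, ?_⟩)
    (inter_subset_inter_right _ (realizAt_subset_realiz d X x))
  obtain ⟨s, hs, hzs⟩ := mem_realiz.1 hz
  by_cases hxs : x ∈ cube d s
  · exact mem_biUnion (show s ∈ {s | s ∈ X ∧ x ∈ cube d s} from ⟨hs, hxs⟩) hzs
  · exact absurd (mem_biUnion (show s ∈ {s | s ∈ X ∧ x ∉ cube d s} from ⟨hs, hxs⟩) hzs)
      (hball (ball_subset_ball hε hzε))

lemma RegPt.of_ball_inter_eq {d : ℕ} {X Y : Finset (Fin d → ℤ)} {x : EuclideanSpace ℝ (Fin d)}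
    {δ : ℝ} (hδ : 0 < δ) (h : ∀ ε ≤ δ, ball x ε ∩ realiz d X = ball x ε ∩ realiz d Y) :
    RegPt d X x → RegPt d Y x := by
  rintro (hint | ⟨ε₀, hε₀, hc⟩)
  · left
    rw [mem_interior_iff_mem_nhds] at hint ⊢
    have hball := Filter.inter_mem (ball_mem_nhds x hδ) hint
    rw [h δ le_rfl] at hball
    exact Filter.mem_of_superset hball inter_subset_right
  · refine Or.inr ⟨min ε₀ δ, lt_min hε₀ hδ, fun ε hε hlt => ?_⟩
    rw [← h ε (hlt.le.trans (min_le_right _ _))]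
    exact hc ε hε (hlt.trans_le (min_le_left _ _))

lemma regPt_congr {d : ℕ} {X Y : Finset (Fin d → ℤ)} {x : EuclideanSpace ℝ (Fin d)}
    (h : ∀ s, x ∈ cube d s → (s ∈ X ↔ s ∈ Y)) : RegPt d X x ↔ RegPt d Y x := by
  have hat : realizAt d X x = realizAt d Y x := by
    ext z
    simp only [realizAt, mem_iUnion₂, mem_ofPred_eq, exists_prop]
    exact exists_congr fun s => and_congr_left' (and_congr_left (h s))
  obtain ⟨δX, hδX, hX⟩ := exists_ball_inter_realiz_eq d X x
  obtain ⟨δY, hδY, hY⟩ := exists_ball_inter_realiz_eq d Y x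
  have hXY : ∀ ε ≤ min δX δY, ball x ε ∩ realiz d X = ball x ε ∩ realiz d Y := fun ε hε => by
    rw [hX ε (hε.trans (min_le_left _ _)), hY ε (hε.trans (min_le_right _ _)), hat]
  have hδ : 0 < min δX δY := lt_min hδX hδY
  exact ⟨RegPt.of_ball_inter_eq hδ hXY, RegPt.of_ball_inter_eq hδ fun ε hε => (hXY ε hε).symm⟩

lemma StarConvex.diff_singleton {E : Type*} [AddCommGroup E] [Module ℝ E] {S : Set E} {p x : E}
    (hS : StarConvex ℝ p S) (φ : E →ₗ[ℝ] ℝ) (hp : φ x < φ p) (hx : ∀ z ∈ S, φ x ≤ φ z) :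
    StarConvex ℝ p (S \ {x}) := by
  rintro z ⟨hzS, hzx⟩ a b ha hb hab
  refine ⟨hS hzS ha hb hab, fun hmem => ?_⟩
  have hφ : a * φ p + b * φ z = φ x := by
    simpa using congrArg φ (mem_singleton_iff.1 hmem)
  rcases ha.eq_or_lt with rfl | ha
  · rw [zero_add] at hab
    subst hab
    exact hzx (by simpa using hmem)
  · have hsplit : a * φ x + b * φ x = φ x := by rw [← add_mul, hab, one_mul]
    linarith [mul_lt_mul_of_pos_left hp ha, mul_le_mul_of_nonneg_left (hx z hzS) hb]

lemma regPt_of_cells_on_face {d : ℕ} {Y : Finset (Fin d → ℤ)} {x : EuclideanSpace ℝ (Fin d)}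
    (hxY : x ∈ realiz d Y) {i : Fin d} {k : ℤ} (hk : ∀ s ∈ Y, x ∈ cube d s → s i = k)
    (hxi : |x i - k| = 1 / 2) : RegPt d Y x := by
  obtain ⟨δ, hδ, hloc⟩ := exists_ball_inter_realiz_eq d Y x
  refine Or.inr ⟨min δ 1, lt_min hδ one_pos, fun ε hε hlt => ?_⟩
  have hεδ : ε ≤ δ := hlt.le.trans (min_le_left _ _)
  have hε1 : ε < 1 := hlt.trans_le (min_le_right _ _)
  -- the punctured ball is star-shaped about `x` pushed `ε / 2` into the cubes along the `i`-th axis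
  set p := x + (ε * (k - x i)) • EuclideanSpace.single i (1 : ℝ)
  set φ : EuclideanSpace ℝ (Fin d) →ₗ[ℝ] ℝ := (k - x i) • EuclideanSpace.projₗ i
  have hsq : (k - x i) ^ 2 = 1 / 4 := by
    rw [← sq_abs, abs_sub_comm, hxi]; norm_num
  have hside : x i - k = 1 / 2 ∨ x i - k = -(1 / 2) := (abs_eq (by norm_num)).1 hxi
  have hp_cube : ∀ s ∈ {s | s ∈ Y ∧ x ∈ cube d s}, p ∈ cube d s := by
    rintro s ⟨hs, hxs⟩ j
    by_cases hj : j = i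
    · subst hj
      rw [hk s hs hxs]
      simp only [p, PiLp.add_apply, PiLp.smul_apply, PiLp.single_apply, if_true,
        smul_eq_mul, mul_one]
      rw [abs_le]
      rcases hside with h | h <;> constructor <;> nlinarith
    · simpa [p, PiLp.single_apply, hj] using hxs j
  have hp_ball : p ∈ ball x ε := by
    rw [mem_ball, dist_eq_norm]
    simp only [p, add_sub_cancel_left, norm_smul, PiLp.norm_single, norm_one, mul_one,
      Real.norm_eq_abs, abs_mul, abs_of_pos hε, abs_sub_comm _ (x i), hxi]
    linarith
  have hφp : φ x < φ p := by
    simp only [φ, p, LinearMap.smul_apply, PiLp.projₗ_apply,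
      PiLp.add_apply, PiLp.smul_apply, PiLp.single_apply, if_true, smul_eq_mul, mul_one]
    nlinarith
  have hφz : ∀ z ∈ ball x ε ∩ realizAt d Y x, φ x ≤ φ z := by
    rintro z ⟨-, hz⟩
    simp only [realizAt, mem_iUnion₂] at hz
    obtain ⟨s, ⟨hs, hxs⟩, hzs⟩ := hz
    have hzi := abs_le.1 (hzs i)
    rw [hk s hs hxs] at hzi
    simp only [φ, LinearMap.smul_apply, PiLp.projₗ_apply, smul_eq_mul]
    rcases hside with h | h <;> nlinarith
  have hstar : StarConvex ℝ p ((ball x ε ∩ realizAt d Y x) \ {x}) :=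
    (((convex_ball x ε).starConvex hp_ball).inter
      (starConvex_iUnion₂ fun s hs => (convex_cube d s).starConvex (hp_cube s hs))).diff_singleton
      φ hφp hφz
  obtain ⟨s₀, hs₀, hxs₀⟩ := mem_realiz.1 hxY
  have hp_mem : p ∈ (ball x ε ∩ realizAt d Y x) \ {x} :=
    ⟨⟨hp_ball, mem_biUnion ⟨hs₀, hxs₀⟩ (hp_cube s₀ ⟨hs₀, hxs₀⟩)⟩,
      fun h => hφp.ne (by rw [mem_singleton_iff.1 h])⟩
  rw [hloc ε hεδ]
  exact hstar.contractibleSpace ⟨p, hp_mem⟩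

lemma mem_nbhd_iff {d : ℕ} {X : Finset (Fin d → ℤ)} {c s : Fin d → ℤ} (hc : c ∈ X) :
    s ∈ nbhd d X c ↔ s ∈ X ∧ ∀ i, |s i - c i| ≤ 1 := by
  simp only [nbhd, Finset.mem_insert, Finset.mem_filter]
  constructor
  · rintro (rfl | h)
    · exact ⟨hc, fun i => by simp⟩
    · exact h
  · exact Or.inr

lemma regPt_nbhd_of_far_cell {d : ℕ} {X : Finset (Fin d → ℤ)} {c t : Fin d → ℤ}
    {x : EuclideanSpace ℝ (Fin d)} (hc : c ∈ X) (hx : x ∈ realiz d (nbhd d X c))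
    (hxt : x ∈ cube d t) {i : Fin d} (hti : 1 < |t i - c i|) : RegPt d (nbhd d X c) x := by
  obtain ⟨s₀, hs₀, hxs₀⟩ := mem_realiz.1 hx
  have hs₀c := abs_le.1 (((mem_nbhd_iff hc).1 hs₀).2 i)
  have hs₀t := abs_le.1 (abs_sub_le_one_of_mem_cube hxs₀ hxt i)
  have htc := lt_abs.1 hti
  refine regPt_of_cells_on_face hx (i := i) (k := s₀ i) (fun s hs hxs => ?_)
    (abs_sub_eq_half_of_mem_cube hxs₀ hxt (by omega))
  have hsc := abs_le.1 (((mem_nbhd_iff hc).1 hs).2 i)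
  have hst := abs_le.1 (abs_sub_le_one_of_mem_cube hxs hxt i)
  -- `s i` and `s₀ i` are both within `1` of `c i` and of `t i`, which are at least `2` apart
  omega

theorem regular_iff_nbhd_regular_general (d : ℕ)
    (X : Finset (Fin d → ℤ)) :
    RegularCub d X ↔ ∀ c ∈ X, RegularCub d (nbhd d X c) := by
  constructor
  · intro hreg c hc x hx
    by_cases hnear : ∀ t ∈ X, x ∈ cube d t → ∀ i, |t i - c i| ≤ 1
    · have hxX : x ∈ realiz d X := by
        obtain ⟨s, hs, hxs⟩ := mem_realiz.1 hx
        exact mem_realiz.2 ⟨s, ((mem_nbhd_iff hc).1 hs).1, hxs⟩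
      refine (regPt_congr fun s hxs => ?_).1 (hreg x hxX)
      rw [mem_nbhd_iff hc]
      exact ⟨fun hs => ⟨hs, hnear s hs hxs⟩, And.left⟩
    · push Not at hnear
      obtain ⟨t, -, hxt, i, hti⟩ := hnear
      exact regPt_nbhd_of_far_cell hc hx hxt hti
  · intro h x hx
    obtain ⟨c, hc, hxc⟩ := mem_realiz.1 hx
    refine (regPt_congr fun s hxs => ?_).2
      (h c hc x (mem_realiz.2 ⟨c, Finset.mem_insert_self c _, hxc⟩))
    rw [mem_nbhd_iff hc]
    exact ⟨fun hs => ⟨hs, abs_sub_le_one_of_mem_cube hxs hxc⟩, And.left⟩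

/-- A cubical set is regular iff the neighborhood of each of its cells is a
regular cubical set. -/
theorem regular_iff_nbhd_regular (d : ℕ) (hd : 2 ≤ d)
    (X : Finset (Fin d → ℤ)) (hX : X.Nonempty) :
    RegularCub d X ↔ ∀ c ∈ X, RegularCub d (nbhd d X c) :=
  regular_iff_nbhd_regular_general d X
end
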